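/- arXiv:math/0503510 — 6 statements merged into one kernel-verified Lean document; each statement's English description precedes it below -/
import Mathlib

section
/- Let n ≥ 3, let M be an (n-1)-variable mean function, let X : Fin n → ℝ be a tuple of positive reals, and define the iteration X⁰ = X and X^{k+1}_i = M applied to the (n-1)-tuple obtained from X^k by deleting its i-th coordinate. Then the sequence k ↦ min_i X^k_i is nondecreasing and the sequence k ↦ max_i X^k_i is nonincreasing. -/
open Filter Topology

/-- An `m`-variable mean function (conditions (i')–(vi') on positive tuples). -/
structure IsMeanFun (m : ℕ) (M : (Fin m → ℝ) → ℝ) : Prop where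
  mean_const : ∀ x : ℝ, 0 < x → M (fun _ => x) = x
  symm : ∀ x : Fin m → ℝ, (∀ i, 0 < x i) → ∀ σ : Equiv.Perm (Fin m), M (x ∘ σ) = M x
  inf_le : ∀ x : Fin m → ℝ, (∀ i, 0 < x i) → (⨅ i, x i) ≤ M x
  le_sup : ∀ x : Fin m → ℝ, (∀ i, 0 < x i) → M x ≤ ⨆ i, x i
  mono : ∀ x y : Fin m → ℝ, (∀ i, 0 < x i) → (∀ i, 0 < y i) →
    (∀ i, x i ≤ y i) → M x ≤ M y
  strictMono : ∀ x y : Fin m → ℝ, (∀ i, 0 < x i) → (∀ i, 0 < y i) →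
    (∀ i, x i < y i) → M x < M y
  continuousOn : ContinuousOn M {x | ∀ i, 0 < x i}

/-- Along the deletion iteration of an `(n-1)`-variable mean (`n = m + 1 ≥ 3`),
`k ↦ min_i X^k_i` is nondecreasing and `k ↦ max_i X^k_i` is nonincreasing. -/
theorem deletion_iteration_min_mono_max_anti
    (m : ℕ) (hm : 2 ≤ m) (M : (Fin m → ℝ) → ℝ) (hM : IsMeanFun m M)
    (X : Fin (m + 1) → ℝ) (hX : ∀ i, 0 < X i)
    (Y : ℕ → Fin (m + 1) → ℝ) (hY0 : Y 0 = X)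
    (hYrec : ∀ k (i : Fin (m + 1)), Y (k + 1) i = M (Y k ∘ i.succAbove)) :
    Monotone (fun k => ⨅ i, Y k i) ∧ Antitone (fun k => ⨆ i, Y k i) := by
  haveI : NeZero m := ⟨by omega⟩
  have hpos : ∀ k i, 0 < Y k i := by
    intro k
    induction k with
    | zero => intro i; rw [hY0]; exact hX i
    | succ k ih =>
      intro i
      rw [hYrec]
      obtain ⟨j0, hj0⟩ := Finite.exists_min (Y k ∘ i.succAbove)
      calc (0:ℝ) < (Y k ∘ i.succAbove) j0 := ih _
        _ ≤ ⨅ l, (Y k ∘ i.succAbove) l := le_ciInf hj0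
        _ ≤ M (Y k ∘ i.succAbove) := hM.inf_le _ (fun l => ih _)
  have bddB : ∀ k, BddBelow (Set.range (Y k)) := fun k =>
    (Set.finite_range _).bddBelow
  have bddA : ∀ k, BddAbove (Set.range (Y k)) := fun k =>
    (Set.finite_range _).bddAbove
  constructor
  · apply monotone_nat_of_le_succ
    intro k
    apply le_ciInf
    intro i
    rw [hYrec]
    calc ⨅ j, Y k j ≤ ⨅ l, (Y k ∘ i.succAbove) l :=
          le_ciInf (fun l => ciInf_le (bddB k) _)
      _ ≤ M (Y k ∘ i.succAbove) := hM.inf_le _ (fun l => hpos k _)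
  · apply antitone_nat_of_succ_le
    intro k
    apply ciSup_le
    intro i
    rw [hYrec]
    calc M (Y k ∘ i.succAbove) ≤ ⨆ l, (Y k ∘ i.succAbove) l :=
          hM.le_sup _ (fun l => hpos k _)
      _ ≤ ⨆ j, Y k j := ciSup_le (fun l => le_ciSup (bddA k) _)
end

section
/- Let n ≥ 3 and let A_{n-1} be the (n-1)-variable arithmetic mean, A_{n-1}(y) = (y_1 + ⋯ + y_{n-1})/(n-1). For any tuple X : Fin n → ℝ of positive reals, the iteration X⁰ = X, X^{k+1}_i = A_{n-1}(X^k with i-th coordinate deleted) converges coordinatewise, and each coordinate sequence converges to the n-variable arithmetic mean (X_1 + ⋯ + X_n)/n. -/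
open Filter Topology

/-! Deleting one coordinate and averaging the remaining `m` preserves the total sum `S`, and
the new `i`-th coordinate is `(S - x i) / m`. Hence the deviation from the mean `S / (m + 1)`
is multiplied by `-1 / m` at every step, which is a contraction as soon as `m ≥ 2`. -/

namespace DeletionArithMean

variable {m : ℕ}

noncomputable def step (x : Fin (m + 1) → ℝ) (i : Fin (m + 1)) : ℝ :=
  (∑ j : Fin m, x (i.succAbove j)) / m

theorem step_eq (x : Fin (m + 1) → ℝ) (i : Fin (m + 1)) :
    step x i = (∑ j, x j - x i) / m := by
  rw [step, Fin.sum_univ_succAbove x i, add_sub_cancel_left]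

theorem sum_step (hm : m ≠ 0) (x : Fin (m + 1) → ℝ) : ∑ i, step x i = ∑ i, x i := by
  simp only [step_eq, ← Finset.sum_div, Finset.sum_sub_distrib, Finset.sum_const,
    Finset.card_univ, Fintype.card_fin, nsmul_eq_mul]
  field_simp
  push_cast
  ring

theorem step_sub_mean (hm : m ≠ 0) (x : Fin (m + 1) → ℝ) (i : Fin (m + 1)) :
    step x i - (∑ j, x j) / (m + 1) = -1 / m * (x i - (∑ j, x j) / (m + 1)) := by
  rw [step_eq]
  field_simp
  ring

theorem sum_iterate_step (hm : m ≠ 0) (x : Fin (m + 1) → ℝ) (k : ℕ) :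
    ∑ i, step^[k] x i = ∑ i, x i := by
  induction k with
  | zero => rfl
  | succ k ih => rw [Function.iterate_succ_apply', sum_step hm, ih]

theorem iterate_step_sub_mean (hm : m ≠ 0) (x : Fin (m + 1) → ℝ) (k : ℕ) (i : Fin (m + 1)) :
    step^[k] x i - (∑ j, x j) / (m + 1) = (-1 / m) ^ k * (x i - (∑ j, x j) / (m + 1)) := by
  induction k generalizing i with
  | zero => simp
  | succ k ih =>
    rw [Function.iterate_succ_apply', ← sum_iterate_step hm, step_sub_mean hm,
      sum_iterate_step hm, ih, pow_succ', mul_assoc]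

theorem tendsto_iterate_step (hm : 2 ≤ m) (x : Fin (m + 1) → ℝ) (i : Fin (m + 1)) :
    Tendsto (fun k => step^[k] x i) atTop (𝓝 ((∑ j, x j) / (m + 1))) := by
  have hm0 : m ≠ 0 := by omega
  have hratio : |(-1 / m : ℝ)| < 1 := by
    rw [abs_div, abs_neg, abs_one, Nat.abs_cast, div_lt_one (by positivity)]
    exact_mod_cast hm
  have hdev := (tendsto_pow_atTop_nhds_zero_of_abs_lt_one hratio).mul_const
    (x i - (∑ j, x j) / (m + 1))
  rw [zero_mul] at hdev
  simpa only [← iterate_step_sub_mean hm0, sub_add_cancel, zero_add] using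
    hdev.add_const ((∑ j, x j) / (m + 1))

end DeletionArithMean

theorem deletion_iteration_arith_mean_general
    (m : ℕ) (hm : 2 ≤ m)
    (X : Fin (m + 1) → ℝ)
    (Y : ℕ → Fin (m + 1) → ℝ) (hY0 : Y 0 = X)
    (hYrec : ∀ k (i : Fin (m + 1)),
      Y (k + 1) i = (∑ j : Fin m, Y k (i.succAbove j)) / (m : ℝ)) :
    ∀ i, Tendsto (fun k => Y k i) atTop (𝓝 ((∑ j, X j) / ((m : ℝ) + 1))) := by
  have hY : ∀ k, Y k = DeletionArithMean.step^[k] X := by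
    intro k
    induction k with
    | zero => exact hY0
    | succ k ih =>
      ext i
      rw [Function.iterate_succ_apply', ← ih, hYrec]
      rfl
  simpa only [hY] using DeletionArithMean.tendsto_iterate_step hm X

/-- For `n = m + 1 ≥ 3`, the deletion iteration associated to the `(n-1)`-variable
arithmetic mean converges in every coordinate to the `n`-variable arithmetic mean. -/
theorem deletion_iteration_arith_mean
    (m : ℕ) (hm : 2 ≤ m)
    (X : Fin (m + 1) → ℝ) (hX : ∀ i, 0 < X i)
    (Y : ℕ → Fin (m + 1) → ℝ) (hY0 : Y 0 = X)
    (hYrec : ∀ k (i : Fin (m + 1)),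
      Y (k + 1) i = (∑ j : Fin m, Y k (i.succAbove j)) / (m : ℝ)) :
    ∀ i, Tendsto (fun k => Y k i) atTop (𝓝 ((∑ j, X j) / ((m : ℝ) + 1))) :=
  deletion_iteration_arith_mean_general m hm X Y hY0 hYrec
end

section
/- Let n ≥ 3 and let G_{n-1} be the (n-1)-variable geometric mean, G_{n-1}(y) = (y_1 ⋯ y_{n-1})^{1/(n-1)}. For any tuple X : Fin n → ℝ of positive reals, the iteration X⁰ = X, X^{k+1}_i = G_{n-1}(X^k with i-th coordinate deleted) converges coordinatewise, and each coordinate sequence converges to the n-variable geometric mean (X_1 ⋯ X_n)^{1/n}. -/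
/-!
Taking logarithms turns the geometric-mean deletion iteration into the arithmetic-mean one,
`L (k + 1) i = (∑ j, L k j - L k i) / m`. This linear map preserves the coordinate sum, so
it fixes the mean `c` of the initial vector and multiplies every deviation `L k i - c` by
`-1/m`; for `m ≥ 2` the deviations decay geometrically.
-/

open Filter Topology

namespace DeletionIteration

section ArithmeticMean

variable {m : ℕ} {L : ℕ → Fin (m + 1) → ℝ}

theorem sum_succAbove_eq_sum_sub (x : Fin (m + 1) → ℝ) (i : Fin (m + 1)) :
    ∑ j : Fin m, x (i.succAbove j) = (∑ j, x j) - x i := by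
  rw [Fin.sum_univ_succAbove x i]
  ring

theorem sum_arith_iterate (hm : m ≠ 0)
    (hL : ∀ k i, L (k + 1) i = (∑ j : Fin m, L k (i.succAbove j)) / m) (k : ℕ) :
    ∑ j, L k j = ∑ j, L 0 j := by
  induction k with
  | zero => rfl
  | succ k ih =>
    simp only [hL, sum_succAbove_eq_sum_sub, ← Finset.sum_div, Finset.sum_sub_distrib,
      Finset.sum_const, Finset.card_univ, Fintype.card_fin, nsmul_eq_mul, ih]
    field_simp
    push_cast
    ring

theorem arith_iterate_sub_mean (hm : m ≠ 0)
    (hL : ∀ k i, L (k + 1) i = (∑ j : Fin m, L k (i.succAbove j)) / m) (k : ℕ)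
    (i : Fin (m + 1)) :
    L k i - (∑ j, L 0 j) / (m + 1) =
      (-(m : ℝ)⁻¹) ^ k * (L 0 i - (∑ j, L 0 j) / (m + 1)) := by
  induction k with
  | zero => simp
  | succ k ih =>
    rw [pow_succ', mul_assoc, ← ih, hL, sum_succAbove_eq_sum_sub, sum_arith_iterate hm hL]
    field_simp
    ring

theorem tendsto_arith_iterate (hm : 2 ≤ m)
    (hL : ∀ k i, L (k + 1) i = (∑ j : Fin m, L k (i.succAbove j)) / m) (i : Fin (m + 1)) :
    Tendsto (fun k => L k i) atTop (𝓝 ((∑ j, L 0 j) / (m + 1))) := by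
  have hm₀ : m ≠ 0 := by omega
  have hratio : |-(m : ℝ)⁻¹| < 1 := by
    rw [abs_neg, abs_inv, Nat.abs_cast, inv_lt_one_iff₀]
    right
    exact_mod_cast hm
  have hdev : Tendsto (fun k => L k i - (∑ j, L 0 j) / (m + 1)) atTop (𝓝 0) := by
    rw [funext (arith_iterate_sub_mean hm₀ hL · i), ← zero_mul (L 0 i - _)]
    exact (tendsto_pow_atTop_nhds_zero_of_abs_lt_one hratio).mul_const _
  simpa only [sub_add_cancel, zero_add] using hdev.add_const ((∑ j, L 0 j) / (m + 1))

end ArithmeticMean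

variable {m : ℕ} {Y : ℕ → Fin (m + 1) → ℝ}

theorem geom_iterate_pos (hY0 : ∀ i, 0 < Y 0 i)
    (hY : ∀ k (i : Fin (m + 1)),
      Y (k + 1) i = (∏ j : Fin m, Y k (i.succAbove j)) ^ ((m : ℝ)⁻¹)) (k : ℕ) (i : Fin (m + 1)) :
    0 < Y k i := by
  induction k generalizing i with
  | zero => exact hY0 i
  | succ k ih =>
    rw [hY]
    exact Real.rpow_pos_of_pos (Finset.prod_pos fun j _ => ih _) _

theorem log_geom_iterate_succ (hY0 : ∀ i, 0 < Y 0 i)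
    (hY : ∀ k (i : Fin (m + 1)),
      Y (k + 1) i = (∏ j : Fin m, Y k (i.succAbove j)) ^ ((m : ℝ)⁻¹)) (k : ℕ) (i : Fin (m + 1)) :
    Real.log (Y (k + 1) i) = (∑ j : Fin m, Real.log (Y k (i.succAbove j))) / m := by
  have hpos := geom_iterate_pos hY0 hY k
  rw [hY, Real.log_rpow (Finset.prod_pos fun j _ => hpos _),
    Real.log_prod fun j _ => (hpos _).ne', inv_mul_eq_div]

end DeletionIteration

open DeletionIteration

/-- For `n = m + 1 ≥ 3`, the deletion iteration associated to the `(n-1)`-variable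
geometric mean converges in every coordinate to the `n`-variable geometric mean. -/
theorem deletion_iteration_geom_mean
    (m : ℕ) (hm : 2 ≤ m)
    (X : Fin (m + 1) → ℝ) (hX : ∀ i, 0 < X i)
    (Y : ℕ → Fin (m + 1) → ℝ) (hY0 : Y 0 = X)
    (hYrec : ∀ k (i : Fin (m + 1)),
      Y (k + 1) i = (∏ j : Fin m, Y k (i.succAbove j)) ^ ((m : ℝ)⁻¹)) :
    ∀ i, Tendsto (fun k => Y k i) atTop (𝓝 ((∏ j, X j) ^ (((m : ℝ) + 1)⁻¹))) := by
  subst hY0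
  intro i
  have hlog := tendsto_arith_iterate (L := fun k j => Real.log (Y k j)) hm
    (log_geom_iterate_succ hX hYrec) i
  have hlimit : Real.exp ((∑ j, Real.log (Y 0 j)) / (m + 1)) =
      (∏ j, Y 0 j) ^ (((m : ℝ) + 1)⁻¹) := by
    rw [Real.rpow_def_of_pos (Finset.prod_pos fun j _ => hX j),
      Real.log_prod fun j _ => (hX j).ne', div_eq_mul_inv]
  rw [← hlimit]
  refine (Real.continuous_exp.tendsto _ |>.comp hlog).congr fun k => ?_
  exact Real.exp_log (geom_iterate_pos hX hYrec k i)
end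

section
/- Let n ≥ 3 and let H_{n-1} be the (n-1)-variable harmonic mean, H_{n-1}(y) = (n-1)/(y_1⁻¹ + ⋯ + y_{n-1}⁻¹). For any tuple X : Fin n → ℝ of positive reals, the iteration X⁰ = X, X^{k+1}_i = H_{n-1}(X^k with i-th coordinate deleted) converges coordinatewise, and each coordinate sequence converges to the n-variable harmonic mean n/(X_1⁻¹ + ⋯ + X_n⁻¹). -/
open Filter Topology

/-!
Inverting coordinatewise conjugates the harmonic-mean deletion iteration to the arithmetic-mean
one, `z ↦ (i ↦ mean of the z j with j ≠ i)`. That map preserves the sum `S` of the coordinates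
and multiplies the deviation of each coordinate from `S / n` by `-1 / (n - 1)`, so for `n ≥ 3`
every coordinate tends to `S / n`; inverting back gives the harmonic mean of `X`.
-/

section MeanOfOthers

variable {ι : Type*} [Fintype ι]

noncomputable def meanOfOthers (z : ι → ℝ) (i : ι) : ℝ :=
  (∑ j, z j - z i) / (Fintype.card ι - 1)

theorem sum_meanOfOthers (hι : Fintype.card ι ≠ 1) (z : ι → ℝ) :
    ∑ i, meanOfOthers z i = ∑ i, z i := by
  have hne : (Fintype.card ι : ℝ) - 1 ≠ 0 := sub_ne_zero.mpr (by exact_mod_cast hι)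
  simp only [meanOfOthers, ← Finset.sum_div, Finset.sum_sub_distrib, Finset.sum_const,
    Finset.card_univ, nsmul_eq_mul]
  field_simp

theorem meanOfOthers_sub_mean (hι : Fintype.card ι ≠ 1) (z : ι → ℝ) (i : ι) :
    meanOfOthers z i - (∑ j, z j) / Fintype.card ι =
      -1 / (Fintype.card ι - 1) * (z i - (∑ j, z j) / Fintype.card ι) := by
  have hcard : (Fintype.card ι : ℝ) ≠ 0 := by exact_mod_cast (Fintype.card_pos_iff.mpr ⟨i⟩).ne'
  have hne : (Fintype.card ι : ℝ) - 1 ≠ 0 := sub_ne_zero.mpr (by exact_mod_cast hι)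
  rw [meanOfOthers]
  field_simp
  ring

theorem iterate_meanOfOthers_sub_mean (hι : Fintype.card ι ≠ 1) (z : ι → ℝ) (k : ℕ) (i : ι) :
    meanOfOthers^[k] z i - (∑ j, z j) / Fintype.card ι =
      (-1 / (Fintype.card ι - 1)) ^ k * (z i - (∑ j, z j) / Fintype.card ι) := by
  induction k generalizing z with
  | zero => simp
  | succ k ih =>
    have hstep := ih (meanOfOthers z)
    rw [sum_meanOfOthers hι] at hstep
    rw [Function.iterate_succ_apply, hstep, meanOfOthers_sub_mean hι, pow_succ, mul_assoc]

theorem tendsto_iterate_meanOfOthers (hι : 3 ≤ Fintype.card ι) (z : ι → ℝ) (i : ι) :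
    Tendsto (fun k => meanOfOthers^[k] z i) atTop (𝓝 ((∑ j, z j) / Fintype.card ι)) := by
  set c : ℝ := (∑ j, z j) / Fintype.card ι
  have hratio : |(-1 / ((Fintype.card ι : ℝ) - 1))| < 1 := by
    have : (3 : ℝ) ≤ Fintype.card ι := by exact_mod_cast hι
    rw [abs_div, abs_neg, abs_one, abs_of_pos (by linarith), div_lt_one (by linarith)]
    linarith
  have hgeom := ((tendsto_pow_atTop_nhds_zero_of_abs_lt_one hratio).mul_const (z i - c)).const_add c
  rw [zero_mul, add_zero] at hgeom
  refine hgeom.congr fun k => ?_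
  rw [← iterate_meanOfOthers_sub_mean (by omega), add_sub_cancel]

end MeanOfOthers

theorem inv_harmonicMean_succAbove (m : ℕ) (y : Fin (m + 1) → ℝ) (i : Fin (m + 1)) :
    ((m : ℝ) / ∑ j : Fin m, (y (i.succAbove j))⁻¹)⁻¹ = meanOfOthers (fun j => (y j)⁻¹) i := by
  rw [inv_div, meanOfOthers, Fin.sum_univ_succAbove _ i, Fintype.card_fin]
  push_cast
  ring

/-- For `n = m + 1 ≥ 3`, the deletion iteration associated to the `(n-1)`-variable
harmonic mean converges in every coordinate to the `n`-variable harmonic mean. -/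
theorem deletion_iteration_harm_mean
    (m : ℕ) (hm : 2 ≤ m)
    (X : Fin (m + 1) → ℝ) (hX : ∀ i, 0 < X i)
    (Y : ℕ → Fin (m + 1) → ℝ) (hY0 : Y 0 = X)
    (hYrec : ∀ k (i : Fin (m + 1)),
      Y (k + 1) i = (m : ℝ) / (∑ j : Fin m, (Y k (i.succAbove j))⁻¹)) :
    ∀ i, Tendsto (fun k => Y k i) atTop
      (𝓝 (((m : ℝ) + 1) / (∑ j, (X j)⁻¹))) := by
  have hconj : ∀ k, (fun i => (Y k i)⁻¹) = meanOfOthers^[k] (fun i => (X i)⁻¹) := by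
    intro k
    induction k with
    | zero => simp [hY0]
    | succ k ih =>
      ext i
      rw [Function.iterate_succ_apply', ← ih, hYrec, inv_harmonicMean_succAbove]
  have hS : 0 < ∑ j, (X j)⁻¹ := Finset.sum_pos (fun j _ => inv_pos.mpr (hX j)) Finset.univ_nonempty
  intro i
  have hcard : 3 ≤ Fintype.card (Fin (m + 1)) := by rw [Fintype.card_fin]; omega
  have hlim := (tendsto_iterate_meanOfOthers hcard (fun j => (X j)⁻¹) i).inv₀ (by positivity)
  simp only [← hconj, inv_inv, inv_div, Fintype.card_fin, Nat.cast_add, Nat.cast_one] at hlim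
  exact hlim
end

section
/- Let n ≥ 3, let A_{n-1}(y) = (y_1 + ⋯ + y_{n-1})/(n-1) be the (n-1)-variable arithmetic mean, and let 0 < x_1⁰ ≤ x_2⁰ ≤ ⋯ ≤ x_n⁰ be reals. Define the iteration X⁰ = (x_1⁰,…,x_n⁰), X^{k+1}_i = A_{n-1}(X^k with i-th coordinate deleted), and write S = Σ_{i=1}^n x_i⁰. Then for every k ≥ 0: x_1^k = ( ((n-1)^k − 1)/n · S + x_1⁰ ) / (n-1)^k if k is even, and x_1^k = ( ((n-1)^k + 1)/n · S − x_n⁰ ) / (n-1)^k if k is odd; similarly x_n^k = ( ((n-1)^k − 1)/n · S + x_n⁰ ) / (n-1)^k if k is even, and x_n^k = ( ((n-1)^k + 1)/n · S − x_1⁰ ) / (n-1)^k if k is odd. -/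
open Filter Topology

lemma fin_iInf_monotone {n : ℕ} {f : Fin (n + 1) → ℝ} (hf : Monotone f) :
    (⨅ i, f i) = f 0 :=
  le_antisymm (ciInf_le (Set.Finite.bddBelow (Set.finite_range f)) 0)
    (le_ciInf fun i => hf (Fin.zero_le i))

lemma fin_iSup_monotone {n : ℕ} {f : Fin (n + 1) → ℝ} (hf : Monotone f) :
    (⨆ i, f i) = f (Fin.last n) :=
  le_antisymm (ciSup_le fun i => hf (Fin.le_last i))
    (le_ciSup (Set.Finite.bddAbove (Set.finite_range f)) (Fin.last n))

lemma fin_iInf_antitone {n : ℕ} {f : Fin (n + 1) → ℝ} (hf : Antitone f) :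
    (⨅ i, f i) = f (Fin.last n) :=
  le_antisymm (ciInf_le (Set.Finite.bddBelow (Set.finite_range f)) (Fin.last n))
    (le_ciInf fun i => hf (Fin.le_last i))

lemma fin_iSup_antitone {n : ℕ} {f : Fin (n + 1) → ℝ} (hf : Antitone f) :
    (⨆ i, f i) = f 0 :=
  le_antisymm (ciSup_le fun i => hf (Fin.zero_le i))
    (le_ciSup (Set.Finite.bddAbove (Set.finite_range f)) 0)

/-- Explicit formula for the minimal and maximal coordinates of the deletion
iteration of the `(n-1)`-variable arithmetic mean (`n = m + 1 ≥ 3`), started from a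
nondecreasing positive tuple `X` with sum `S`:  for even `k` the minimum is
`((m^k - 1)/n · S + X₀)/m^k` and the maximum is `((m^k - 1)/n · S + X_{n-1})/m^k`,
while for odd `k` they are `((m^k + 1)/n · S - X_{n-1})/m^k` and
`((m^k + 1)/n · S - X₀)/m^k` respectively. -/
theorem deletion_iteration_arith_explicit
    (m : ℕ) (hm : 2 ≤ m)
    (X : Fin (m + 1) → ℝ) (hX : ∀ i, 0 < X i) (hmono : Monotone X)
    (Y : ℕ → Fin (m + 1) → ℝ) (hY0 : Y 0 = X)
    (hYrec : ∀ k (i : Fin (m + 1)),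
      Y (k + 1) i = (∑ j : Fin m, Y k (i.succAbove j)) / (m : ℝ)) :
    ∀ k : ℕ,
      (Even k →
        (⨅ i, Y k i) =
          (((m : ℝ) ^ k - 1) / ((m : ℝ) + 1) * (∑ j, X j) + X 0) / (m : ℝ) ^ k ∧
        (⨆ i, Y k i) =
          (((m : ℝ) ^ k - 1) / ((m : ℝ) + 1) * (∑ j, X j) + X (Fin.last m)) / (m : ℝ) ^ k) ∧
      (Odd k →
        (⨅ i, Y k i) =
          (((m : ℝ) ^ k + 1) / ((m : ℝ) + 1) * (∑ j, X j) - X (Fin.last m)) / (m : ℝ) ^ k ∧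
        (⨆ i, Y k i) =
          (((m : ℝ) ^ k + 1) / ((m : ℝ) + 1) * (∑ j, X j) - X 0) / (m : ℝ) ^ k) := by
  have hm0 : (0:ℝ) < (m:ℝ) := by positivity
  have hm0' : (m:ℝ) ≠ 0 := ne_of_gt hm0
  have hm1 : (m:ℝ) + 1 ≠ 0 := by positivity
  set S : ℝ := ∑ j, X j with hS
  -- closed form
  have key : ∀ k i, Y k i =
      (((m:ℝ)^k - (-1:ℝ)^k) / ((m:ℝ) + 1) * S + (-1:ℝ)^k * X i) / (m:ℝ)^k := by
    intro k
    induction k with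
    | zero =>
      intro i
      simp [hY0]
    | succ k ih =>
      intro i
      have hsum : ∑ j : Fin m, X (i.succAbove j) = S - X i := by
        have := Fin.sum_univ_succAbove X i
        rw [hS]; linarith [this]
      rw [hYrec k i]
      have : ∑ j : Fin m, Y k (i.succAbove j)
          = (((m:ℝ) * (((m:ℝ)^k - (-1:ℝ)^k) / ((m:ℝ) + 1) * S))
              + (-1:ℝ)^k * (S - X i)) / (m:ℝ)^k := by
        simp only [ih]
        rw [← Finset.sum_div]
        congr 1
        rw [Finset.sum_add_distrib, Finset.sum_const, ← Finset.mul_sum, hsum]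
        simp only [Finset.card_univ, Fintype.card_fin, nsmul_eq_mul]
      rw [this]
      have hmk : ((m:ℝ)^k) ≠ 0 := by positivity
      field_simp
      ring
  intro k
  rcases Nat.even_or_odd k with hk | hk
  · have hneg : (-1:ℝ)^k = 1 := hk.neg_one_pow
    refine ⟨fun _ => ?_, fun h => absurd hk (Nat.not_even_iff_odd.mpr h)⟩
    have hmono' : Monotone (Y k) := by
      intro a b hab
      rw [key k a, key k b, hneg]
      have : X a ≤ X b := hmono hab
      have hp : (0:ℝ) < (m:ℝ)^k := by positivity
      gcongr
    constructor
    · rw [fin_iInf_monotone hmono', key k 0, hneg]; ring_nf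
    · rw [fin_iSup_monotone hmono', key k (Fin.last m), hneg]; ring_nf
  · have hneg : (-1:ℝ)^k = -1 := hk.neg_one_pow
    refine ⟨fun h => absurd hk (Nat.not_odd_iff_even.mpr h), fun _ => ?_⟩
    have hanti : Antitone (Y k) := by
      intro a b hab
      rw [key k a, key k b, hneg]
      have : X a ≤ X b := hmono hab
      have hp : (0:ℝ) < (m:ℝ)^k := by positivity
      exact div_le_div_of_nonneg_right (by linarith) hp.le
    constructor
    · rw [fin_iInf_antitone hanti, key k (Fin.last m), hneg]; ring_nf
    · rw [fin_iSup_antitone hanti, key k 0, hneg]; ring_nf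
end

section
/- Let n ≥ 2, let M be a two-variable mean function, and let 0 < x_1⁰ ≤ x_2⁰ ≤ ⋯ ≤ x_n⁰ be reals. Define the chain iteration: x_1^{k+1} = M(x_1^k, x_2^k), x_n^{k+1} = M(x_{n-1}^k, x_n^k), and x_i^{k+1} = M(x_{i-1}^k, x_{i+1}^k) for 1 < i < n. Then for every i the sequence k ↦ x_i^k converges, all n limits are equal, and the common limit L satisfies x_1⁰ ≤ L ≤ x_n⁰. -/
/-!
Each iterate stays sorted, so the first coordinate is nondecreasing and bounded, hence tends to
some `a > 0`. If two consecutive coordinates `x_{i-1}, x_i` tend to `a`, then so does `x_{i+1}`: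
`x_i^{k+1} = M(x_{i-1}^k, x_{i+1}^k)` tends to `a`, while `x_{i+1}^k ≥ b > a` infinitely often
would keep it above a value close to `M(a, b) > a`. Induction along the chain gives the common
limit.
-/

open Filter Topology

/-- A two-variable mean function on positive reals: idempotent, symmetric, strictly
internal, nondecreasing in each argument (strictly so when both increase), and
continuous on the positive quadrant. -/
structure IsMeanFun2 (M : ℝ → ℝ → ℝ) : Prop where
  idem : ∀ x : ℝ, 0 < x → M x x = x
  symm : ∀ x y : ℝ, 0 < x → 0 < y → M x y = M y x
  between : ∀ x y : ℝ, 0 < x → x < y → x < M x y ∧ M x y < y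
  mono : ∀ x y x' y' : ℝ, 0 < x → 0 < y → 0 < x' → 0 < y' →
    x ≤ x' → y ≤ y' → M x y ≤ M x' y'
  strictMono : ∀ x y x' y' : ℝ, 0 < x → 0 < y → 0 < x' → 0 < y' →
    x < x' → y < y' → M x y < M x' y'
  continuousOn : ContinuousOn (fun p : ℝ × ℝ => M p.1 p.2) {p | 0 < p.1 ∧ 0 < p.2}

open Set

namespace IsMeanFun2

variable {M : ℝ → ℝ → ℝ} (hM : IsMeanFun2 M)
include hM

theorem mem_Icc {x y : ℝ} (hx : 0 < x) (hxy : x ≤ y) : M x y ∈ Icc x y := by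
  rcases hxy.eq_or_lt with rfl | hlt
  · simp [hM.idem x hx]
  · exact ⟨(hM.between x y hx hlt).1.le, (hM.between x y hx hlt).2.le⟩

theorem tendsto {α : Type*} {l : Filter α} {u v : α → ℝ} {a b : ℝ} (ha : 0 < a) (hb : 0 < b)
    (hu : Tendsto u l (𝓝 a)) (hv : Tendsto v l (𝓝 b)) :
    Tendsto (fun k => M (u k) (v k)) l (𝓝 (M a b)) :=
  ((hM.continuousOn.continuousAt (prod_mem_nhds (Ioi_mem_nhds ha) (Ioi_mem_nhds hb))).tendsto.comp
    (hu.prodMk_nhds hv) :)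

theorem tendsto_right_of_tendsto {α : Type*} {l : Filter α} {u v : α → ℝ} {a : ℝ} (ha : 0 < a)
    (hu : Tendsto u l (𝓝 a)) (hu_pos : ∀ k, 0 < u k) (huv : ∀ k, u k ≤ v k)
    (hM_lim : Tendsto (fun k => M (u k) (v k)) l (𝓝 a)) : Tendsto v l (𝓝 a) := by
  rw [tendsto_order]
  refine ⟨fun a' ha' => ?_, fun b hab => ?_⟩
  · filter_upwards [hu.eventually (lt_mem_nhds ha')] with k hk using hk.trans_le (huv k)
  · have hb : 0 < b := ha.trans hab
    obtain ⟨c, hac, hc⟩ := exists_between (hM.between a b ha hab).1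
    have h_above : ∀ᶠ k in l, c < M (u k) b :=
      (hM.tendsto ha hb hu tendsto_const_nhds).eventually (lt_mem_nhds hc)
    filter_upwards [h_above, hM_lim.eventually (gt_mem_nhds hac)] with k hk hk'
    by_contra! hbv
    have := hM.mono (u k) b (u k) (v k) (hu_pos k) hb (hu_pos k) (hb.trans_le hbv) le_rfl hbv
    linarith

end IsMeanFun2

/-- At `i = 0` the left neighbour is `y 0` because `0 - 1 = 0` in `ℕ`; the `min` makes
`y (n - 1)` the right neighbour of the last coordinate `n - 1`. -/
def chainStep (M : ℝ → ℝ → ℝ) (n : ℕ) (y : ℕ → ℝ) (i : ℕ) : ℝ :=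
  M (y (i - 1)) (y (min (i + 1) (n - 1)))

section ChainStep

variable {M : ℝ → ℝ → ℝ} (hM : IsMeanFun2 M) {n : ℕ} {y : ℕ → ℝ}
  (hy : MonotoneOn y (Iio n)) (hy_pos : ∀ i < n, 0 < y i)
include hM hy hy_pos

theorem chainStep_monotoneOn : MonotoneOn (chainStep M n y) (Iio n) := by
  intro i hi j hj hij
  simp only [mem_Iio] at hi hj
  exact hM.mono _ _ _ _ (hy_pos _ (by omega)) (hy_pos _ (by omega)) (hy_pos _ (by omega))
    (hy_pos _ (by omega)) (hy (by simp; omega) (by simp; omega) (by omega))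
    (hy (by simp; omega) (by simp; omega) (by omega))

theorem chainStep_mem_Icc {i : ℕ} (hi : i < n) :
    chainStep M n y i ∈ Icc (y (i - 1)) (y (min (i + 1) (n - 1))) :=
  hM.mem_Icc (hy_pos _ (by omega)) (hy (by simp; omega) (by simp; omega) (by omega))

end ChainStep

section ChainOrbit

variable {M : ℝ → ℝ → ℝ} (hM : IsMeanFun2 M) {n : ℕ} {Y : ℕ → ℕ → ℝ}
  (hY : MonotoneOn (Y 0) (Iio n)) (hY_pos : 0 < Y 0 0)
  (hstep : ∀ k, ∀ i < n, Y (k + 1) i = chainStep M n (Y k) i)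
include hM hY hY_pos hstep

theorem chain_orbit_sorted_mem_Icc (k : ℕ) :
    MonotoneOn (Y k) (Iio n) ∧ ∀ i < n, Y k i ∈ Icc (Y 0 0) (Y 0 (n - 1)) := by
  induction k with
  | zero =>
    exact ⟨hY, fun i hi => ⟨hY (by simp; omega) (by simpa) (Nat.zero_le i),
      hY (by simpa) (by simp; omega) (by omega)⟩⟩
  | succ k ih =>
    obtain ⟨hsorted, hbound⟩ := ih
    have hpos : ∀ i < n, 0 < Y k i := fun i hi => hY_pos.trans_le (hbound i hi).1
    refine ⟨(chainStep_monotoneOn hM hsorted hpos).congr fun i hi => (hstep k i hi).symm,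
      fun i hi => ?_⟩
    have hmem := chainStep_mem_Icc hM hsorted hpos hi
    rw [hstep k i hi]
    exact ⟨(hbound _ (by omega)).1.trans hmem.1, hmem.2.trans (hbound _ (by omega)).2⟩

theorem chain_orbit_pos (k : ℕ) {i : ℕ} (hi : i < n) : 0 < Y k i :=
  hY_pos.trans_le ((chain_orbit_sorted_mem_Icc hM hY hY_pos hstep k).2 i hi).1

theorem monotone_chain_orbit_first (hn : 0 < n) : Monotone fun k => Y k 0 := by
  refine monotone_nat_of_le_succ fun k => ?_
  have := (chain_orbit_sorted_mem_Icc hM hY hY_pos hstep k).1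
  rw [hstep k 0 hn]
  exact (chainStep_mem_Icc hM this (fun i hi => chain_orbit_pos hM hY hY_pos hstep k hi) hn).1

theorem tendsto_chain_orbit {a : ℝ} (ha : 0 < a)
    (hfirst : Tendsto (fun k => Y k 0) atTop (𝓝 a)) :
    ∀ i < n, Tendsto (fun k => Y k i) atTop (𝓝 a) := by
  intro i
  induction i using Nat.strong_induction_on with
  | _ i ih =>
    intro hi
    rcases i with _ | j
    · exact hfirst
    · have hstep_j : ∀ k, Y (k + 1) j = M (Y k (j - 1)) (Y k (j + 1)) := fun k => by
        rw [hstep k j (by omega), chainStep, min_eq_left (by omega)]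
      refine hM.tendsto_right_of_tendsto ha (ih (j - 1) (by omega) (by omega))
        (fun k => chain_orbit_pos hM hY hY_pos hstep k (by omega))
        (fun k => (chain_orbit_sorted_mem_Icc hM hY hY_pos hstep k).1
          (by simp; omega) (by simp; omega) (by omega)) ?_
      simpa only [Function.comp_def, hstep_j] using
        (ih j (by omega) (by omega)).comp (tendsto_add_atTop_nat 1)

theorem chain_orbit_converges (hn : 0 < n) :
    ∃ L, (∀ i < n, Tendsto (fun k => Y k i) atTop (𝓝 L)) ∧ Y 0 0 ≤ L ∧ L ≤ Y 0 (n - 1) := by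
  have hmono := monotone_chain_orbit_first hM hY hY_pos hstep hn
  have hbound : ∀ k, Y k 0 ≤ Y 0 (n - 1) := fun k =>
    ((chain_orbit_sorted_mem_Icc hM hY hY_pos hstep k).2 0 hn).2
  have hL := tendsto_atTop_ciSup hmono ⟨_, forall_mem_range.2 hbound⟩
  set L := ⨆ k, Y k 0
  have hL_ge : Y 0 0 ≤ L := hmono.ge_of_tendsto hL 0
  exact ⟨L, tendsto_chain_orbit hM hY hY_pos hstep (hY_pos.trans_le hL_ge) hL,
    hL_ge, le_of_tendsto' hL hbound⟩

end ChainOrbit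

/-- **Theorem 3.2.** For `n ≥ 2`, a two-variable mean `M` and a nondecreasing
positive tuple `0 < x₀ ≤ … ≤ x_{n-1}` (indices `0, …, n-1`), the chain iteration
`x₀^{k+1} = M(x₀^k, x₁^k)`, `x_{n-1}^{k+1} = M(x_{n-2}^k, x_{n-1}^k)`,
`x_i^{k+1} = M(x_{i-1}^k, x_{i+1}^k)` for `0 < i < n-1`, converges in every
coordinate to a common limit `L` with `x₀ ≤ L ≤ x_{n-1}`. -/
theorem chain_iteration_converges
    (n : ℕ) (hn : 2 ≤ n) (M : ℝ → ℝ → ℝ) (hM : IsMeanFun2 M)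
    (X : ℕ → ℝ) (hpos : 0 < X 0)
    (hmono : ∀ i j, i ≤ j → j < n → X i ≤ X j)
    (Y : ℕ → ℕ → ℝ) (hY0 : ∀ i < n, Y 0 i = X i)
    (hfirst : ∀ k, Y (k + 1) 0 = M (Y k 0) (Y k 1))
    (hlast : ∀ k, Y (k + 1) (n - 1) = M (Y k (n - 2)) (Y k (n - 1)))
    (hmid : ∀ k i, 0 < i → i < n - 1 → Y (k + 1) i = M (Y k (i - 1)) (Y k (i + 1))) :
    ∃ L : ℝ, (∀ i < n, Tendsto (fun k => Y k i) atTop (𝓝 L)) ∧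
      X 0 ≤ L ∧ L ≤ X (n - 1) := by
  have hY : MonotoneOn (Y 0) (Iio n) := fun i hi j hj hij => by
    rw [hY0 i hi, hY0 j hj]
    exact hmono i j hij hj
  have hstep : ∀ k, ∀ i < n, Y (k + 1) i = chainStep M n (Y k) i := by
    intro k i hi
    rcases (by omega : i = n - 1 ∨ i = 0 ∨ (0 < i ∧ i < n - 1)) with rfl | rfl | ⟨h0, h1⟩
    · rw [hlast, chainStep, show n - 1 - 1 = n - 2 by omega, min_eq_right (by omega)]
    · rw [hfirst, chainStep, Nat.zero_sub, min_eq_left (by omega)]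
    · rw [hmid k i h0 h1, chainStep, min_eq_left (by omega)]
  obtain ⟨L, hL, hL_ge, hL_le⟩ :=
    chain_orbit_converges hM hY (by rwa [hY0 0 (by omega)]) hstep (by omega)
  rw [hY0 0 (by omega)] at hL_ge
  rw [hY0 (n - 1) (by omega)] at hL_le
  exact ⟨L, hL, hL_ge, hL_le⟩
end
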